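/- Let A be an n-dimensional perfect evolution algebra over a field K with n ≥ 3 and natural basis B = (e_1, …, e_n), such that span{e_1} is an ideal of A and no proper ideal of A spanned by a subset of B has dimension greater than 1; write M_B in block form with first column equal to (ω_{11}, 0, …, 0)ᵗ, first row (ω_{11}, U) and lower-right (n−1)×(n−1) block Y. If B' = (e'_1, …, e'_n) is any natural basis of A whose structure matrix M_{B'} has the same block form (its first column is zero below the (1,1) entry), then the row U' of M_{B'} has the same number of zero entries as U, and the lower-right (n−1)×(n−1) block Y' of M_{B'} has the same number of zero entries as Y. -/

import Mathlib

open Submodule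

section EvolutionAlgebraDefs

variable {K A : Type*} [Field K] [NonUnitalNonAssocCommRing A] [Module K A]
  [SMulCommClass K A A] [IsScalarTower K A A]

/-- A *natural basis* of an evolution algebra: distinct basis vectors multiply to zero. -/
def IsNaturalBasis {ι : Type*} (b : Module.Basis ι K A) : Prop :=
  ∀ i j : ι, i ≠ j → b i * b j = 0

/-- An *ideal* of the commutative (not necessarily associative or unital) `K`-algebra `A`:
a `K`-subspace closed under multiplication by arbitrary elements of `A`. -/
def IsEvoIdeal (I : Submodule K A) : Prop :=
  ∀ a : A, ∀ x ∈ I, a * x ∈ I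

variable (K A)

/-- `A²`: the `K`-linear span of all products of elements of `A`. -/
def sqSpan : Submodule K A :=
  Submodule.span K {z : A | ∃ x y : A, z = x * y}

/-- `A` is *perfect*: `A² = A`. -/
def IsPerfectEvo : Prop := sqSpan K A = ⊤

/-- `A` is *simple*: `A² ≠ 0` and the only ideals of `A` are `0` and `A`. -/
def IsSimpleEvo : Prop :=
  sqSpan K A ≠ ⊥ ∧ ∀ I : Submodule K A, IsEvoIdeal I → I = ⊥ ∨ I = ⊤

/-- `A` is *irreducible*: it cannot be decomposed as the direct sum of two nonzero ideals. -/
def IsIrreducibleEvo : Prop :=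
  ¬ ∃ I J : Submodule K A, IsEvoIdeal I ∧ IsEvoIdeal J ∧ I ≠ ⊥ ∧ J ≠ ⊥ ∧
    I ⊓ J = ⊥ ∧ I ⊔ J = ⊤

variable {A}

/-- The smallest ideal of `A` containing `x`. -/
def idealGenerated (x : A) : Submodule K A :=
  sInf {I : Submodule K A | IsEvoIdeal I ∧ x ∈ I}

variable {K}

/-- The structure matrix of a basis: entry `(k, i)` is the coefficient of `e k` in `(e i)²`. -/
noncomputable def structMatrix {n : ℕ} (b : Module.Basis (Fin n) K A) :
    Matrix (Fin n) (Fin n) K :=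
  Matrix.of fun k i => b.repr (b i * b i) k

end EvolutionAlgebraDefs

section Aux
variable {K A : Type*} [Field K] [NonUnitalNonAssocCommRing A] [Module K A]
  [SMulCommClass K A A] [IsScalarTower K A A] {n : ℕ}

lemma mul_eq_sum_diag (b : Module.Basis (Fin n) K A) (hb : IsNaturalBasis b) (x y : A) :
    x * y = ∑ i, (b.repr x i * b.repr y i) • (b i * b i) := by
  conv_lhs => rw [← b.sum_repr x, ← b.sum_repr y]
  rw [Finset.sum_mul]
  simp_rw [Finset.mul_sum, smul_mul_assoc, mul_smul_comm, smul_smul]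
  refine Finset.sum_congr rfl fun i _ => Finset.sum_eq_single i
    (fun j _ hj => by rw [hb i j (Ne.symm hj), smul_zero]) (by simp)

lemma mul_basis_eq (b : Module.Basis (Fin n) K A) (hb : IsNaturalBasis b) (a : A) (i : Fin n) :
    a * b i = b.repr a i • (b i * b i) := by
  rw [mul_eq_sum_diag b hb a (b i), Finset.sum_eq_single i
    (fun j _ hj => by simp [b.repr_self, Finsupp.single_apply, Ne.symm hj]) (by simp)]
  simp

lemma sqSpan_eq (b : Module.Basis (Fin n) K A) (hb : IsNaturalBasis b) :
    Submodule.span K {z : A | ∃ x y : A, z = x * y} =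
      Submodule.span K (Set.range fun i => b i * b i) := by
  apply le_antisymm
  · rw [Submodule.span_le]
    rintro z ⟨x, y, rfl⟩
    rw [mul_eq_sum_diag b hb x y]
    exact Submodule.sum_mem _ fun i _ =>
      Submodule.smul_mem _ _ (Submodule.subset_span ⟨i, rfl⟩)
  · rw [Submodule.span_le]
    rintro z ⟨i, rfl⟩
    exact Submodule.subset_span ⟨b i, b i, rfl⟩

lemma sq_linearIndependent (b : Module.Basis (Fin n) K A) (hb : IsNaturalBasis b)
    (hperf : Submodule.span K {z : A | ∃ x y : A, z = x * y} = ⊤) :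
    LinearIndependent K (fun i => b i * b i) := by
  have hfin : Module.Finite K A := Module.Finite.of_basis b
  apply linearIndependent_of_top_le_span_of_card_eq_finrank
  · rw [← sqSpan_eq b hb, hperf]
  · rw [Module.finrank_eq_card_basis b]

lemma exists_perm_smul (b b' : Module.Basis (Fin n) K A) (hb : IsNaturalBasis b)
    (hb' : IsNaturalBasis b')
    (hperf : Submodule.span K {z : A | ∃ x y : A, z = x * y} = ⊤) :
    ∃ σ : Equiv.Perm (Fin n), ∃ α : Fin n → K, (∀ j, α j ≠ 0) ∧
      ∀ j, b' j = α j • b (σ j) := by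
  classical
  set c : Fin n → Fin n → K := fun i j => b.repr (b' j) i with hc
  have hli := sq_linearIndependent b hb hperf
  have hrow : ∀ i j k, j ≠ k → c i j * c i k = 0 := by
    intro i j k hjk
    have h0 : ∑ i, (c i j * c i k) • (b i * b i) = 0 := by
      rw [← mul_eq_sum_diag b hb (b' j) (b' k), hb' j k hjk]
    have := Fintype.linearIndependent_iff.mp hli _ h0
    exact this i
  have hrownz : ∀ i, ∃ j, c i j ≠ 0 := by
    intro i
    by_contra h
    push_neg at h
    have : (b.coord i : A →ₗ[K] K) = 0 := b'.ext fun j => h j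
    have h1 : (b.coord i) (b i) = 1 := by simp
    rw [this] at h1
    simp at h1
  have hcolnz : ∀ j, ∃ i, c i j ≠ 0 := by
    intro j
    by_contra h
    push_neg at h
    have : b.repr (b' j) = 0 := Finsupp.ext fun i => h i
    have := b.repr.map_eq_zero_iff.mp this
    exact b'.ne_zero j this
  choose ρ hρ using hrownz
  have hρuniq : ∀ i j, c i j ≠ 0 → j = ρ i := by
    intro i j hij
    by_contra hne
    exact hij (by have := hrow i j (ρ i) hne; rcases mul_eq_zero.mp this with h | h
                  exacts [h, absurd h (hρ i)])
  have hρsurj : Function.Surjective ρ := by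
    intro j
    obtain ⟨i, hi⟩ := hcolnz j
    exact ⟨i, (hρuniq i j hi).symm⟩
  have hρbij : Function.Bijective ρ := Finite.surjective_iff_bijective.mp hρsurj
  let σ : Equiv.Perm (Fin n) := (Equiv.ofBijective ρ hρbij).symm
  have hσ : ∀ j, ρ (σ j) = j := fun j => (Equiv.ofBijective ρ hρbij).apply_symm_apply j
  refine ⟨σ, fun j => c (σ j) j, fun j => ?_, fun j => ?_⟩
  · have := hρ (σ j); rwa [hσ j] at this
  · have hval : ∀ i, i ≠ σ j → c i j = 0 := by
      intro i hi
      by_contra hne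
      have := hρuniq i j hne
      exact hi (by
        have : ρ i = j := this.symm
        have h2 : ρ i = ρ (σ j) := by rw [this, hσ j]
        exact hρbij.injective h2)
    calc b' j = ∑ i, c i j • b i := (b.sum_repr (b' j)).symm
    _ = c (σ j) j • b (σ j) := Finset.sum_eq_single _
        (fun i _ hi => by rw [hval i hi, zero_smul]) (by simp)

lemma structMatrix_rel (b b' : Module.Basis (Fin n) K A) (σ : Equiv.Perm (Fin n))
    (α : Fin n → K) (hα : ∀ j, α j ≠ 0) (h : ∀ j, b' j = α j • b (σ j)) (i j : Fin n) :
    structMatrix b' i j = (α j * α j * (α i)⁻¹) * structMatrix b (σ i) (σ j) := by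
  classical
  have hb'k : ∀ k : Fin n, b k = (α (σ.symm k))⁻¹ • b' (σ.symm k) := by
    intro k
    rw [h (σ.symm k), Equiv.apply_symm_apply, inv_smul_smul₀ (hα _)]
  have hsq : b' j * b' j = (α j * α j) • (b (σ j) * b (σ j)) := by
    rw [h j, smul_mul_assoc, mul_smul_comm, smul_smul]
  have hexp : b (σ j) * b (σ j) = ∑ k, structMatrix b k (σ j) • b k :=
    (b.sum_repr _).symm
  have : b'.repr (b (σ j) * b (σ j)) i =
      ∑ k, structMatrix b k (σ j) * ((α (σ.symm k))⁻¹ * (b'.repr (b' (σ.symm k)) i)) := by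
    rw [hexp]
    simp_rw [hb'k]
    rw [map_sum, Finsupp.finset_sum_apply]
    refine Finset.sum_congr rfl fun k _ => ?_
    rw [map_smul, map_smul, Finsupp.smul_apply, Finsupp.smul_apply, smul_eq_mul,
      smul_eq_mul]
  have hsum : b'.repr (b (σ j) * b (σ j)) i =
      structMatrix b (σ i) (σ j) * (α i)⁻¹ := by
    rw [this, Finset.sum_eq_single (σ i)]
    · simp
    · intro k _ hk
      have : σ.symm k ≠ i := by
        intro he; apply hk; rw [← he, Equiv.apply_symm_apply]
      simp [b'.repr_self, Finsupp.single_apply, this]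
    · simp
  show b'.repr (b' j * b' j) i = _
  rw [hsq, map_smul]
  simp only [Finsupp.smul_apply, smul_eq_mul]
  rw [hsum]; ring

end Aux

/-- If an `n`-dimensional perfect evolution algebra (`n ≥ 3`) has a
maximal `1`-basic ideal `span {e_1}`, then for any natural basis whose structure matrix has
the same block form (first column zero below the `(1,1)` entry), the number of zeros in the
first row off the `(1,1)` entry (the block `U`) and in the lower-right `(n-1) × (n-1)`
block `Y` are the same as for the original basis. -/
theorem one_basic_ideal_zero_counts_invariant
    {K A : Type*} [Field K] [NonUnitalNonAssocCommRing A] [Module K A]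
    [SMulCommClass K A A] [IsScalarTower K A A]
    {n : ℕ} (hn : 3 ≤ n) (b b' : Module.Basis (Fin n) K A)
    (hb : IsNaturalBasis b) (hb' : IsNaturalBasis b')
    (hperf : IsPerfectEvo K A)
    (hI : IsEvoIdeal (Submodule.span K {b ⟨0, by omega⟩}))
    (hmax : ∀ (J : Submodule K A) (t : Set (Fin n)),
      IsEvoIdeal J → J ≠ ⊤ → J = Submodule.span K (⇑b '' t) →
        Module.finrank K ↥J ≤ 1)
    (hblock : ∀ k : Fin n, k ≠ ⟨0, by omega⟩ → structMatrix b' k ⟨0, by omega⟩ = 0) :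
    {j : Fin n | j ≠ ⟨0, by omega⟩ ∧ structMatrix b' ⟨0, by omega⟩ j = 0}.ncard =
        {j : Fin n | j ≠ ⟨0, by omega⟩ ∧ structMatrix b ⟨0, by omega⟩ j = 0}.ncard ∧
      {p : Fin n × Fin n | p.1 ≠ ⟨0, by omega⟩ ∧ p.2 ≠ ⟨0, by omega⟩ ∧
          structMatrix b' p.1 p.2 = 0}.ncard =
        {p : Fin n × Fin n | p.1 ≠ ⟨0, by omega⟩ ∧ p.2 ≠ ⟨0, by omega⟩ ∧
          structMatrix b p.1 p.2 = 0}.ncard := by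
  classical
  have hfinA : Module.Finite K A := Module.Finite.of_basis b
  set z : Fin n := ⟨0, by omega⟩ with hzdef
  obtain ⟨σ, α, hα, hba⟩ := exists_perm_smul b b' hb hb' hperf
  have hrel := structMatrix_rel b b' σ α hα hba
  have hzero : ∀ i j, structMatrix b' i j = 0 ↔ structMatrix b (σ i) (σ j) = 0 := by
    intro i j
    rw [hrel i j]
    constructor
    · intro h
      rcases mul_eq_zero.mp h with h | h
      · rcases mul_eq_zero.mp h with h | h
        · exact absurd h (mul_ne_zero (hα j) (hα j))
        · exact absurd h (inv_ne_zero (hα i))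
      · exact h
    · intro h; rw [h, mul_zero]
  -- σ fixes z
  have hσz : σ z = z := by
    by_contra hm
    set m : Fin n := σ z with hmdef
    have hcol : ∀ l, l ≠ m → structMatrix b l m = 0 := by
      intro l hl
      have hk : σ.symm l ≠ z := by
        intro he
        apply hl
        rw [← σ.apply_symm_apply l, he, hmdef]
      have h0 := hblock (σ.symm l) hk
      rw [hzero] at h0
      rwa [Equiv.apply_symm_apply] at h0
    have hm2 : b m * b m ∈ Submodule.span K ({b m} : Set A) := by
      have hmexp : b m * b m = ∑ k, structMatrix b k m • b k := (b.sum_repr _).symm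
      rw [hmexp, Finset.sum_eq_single m
        (fun l _ hl => by rw [hcol l hl, zero_smul]) (by simp)]
      exact Submodule.smul_mem _ _ (Submodule.mem_span_singleton_self _)
    have hz2 : b z * b z ∈ Submodule.span K ({b z} : Set A) :=
      hI (b z) (b z) (Submodule.mem_span_singleton_self _)
    set J : Submodule K A := Submodule.span K (⇑b '' ({z, m} : Set (Fin n))) with hJdef
    have hJset : (⇑b '' ({z, m} : Set (Fin n)) : Set A) = {b z, b m} := by
      simp [Set.image_insert_eq]
    have hsubz : Submodule.span K ({b z} : Set A) ≤ J :=
      Submodule.span_mono (by rw [hJset]; intro x hx; simp at hx; simp [hx])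
    have hsubm : Submodule.span K ({b m} : Set A) ≤ J :=
      Submodule.span_mono (by rw [hJset]; intro x hx; simp at hx; simp [hx])
    have hJideal : IsEvoIdeal J := by
      intro a x hx
      induction hx using Submodule.span_induction with
      | mem y hy =>
        rw [hJset] at hy
        rcases hy with rfl | rfl
        · rw [mul_basis_eq b hb a z]
          exact Submodule.smul_mem _ _ (hsubz hz2)
        · rw [mul_basis_eq b hb a m]
          exact Submodule.smul_mem _ _ (hsubm hm2)
      | zero => rw [mul_zero]; exact J.zero_mem
      | add u v _ _ hu hv => rw [mul_add]; exact J.add_mem hu hv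
      | smul k u _ hu => rw [mul_smul_comm]; exact J.smul_mem k hu
    have hbne : b z ≠ b m := fun he => (Ne.symm hm) (b.injective he)
    have hli2 : LinearIndependent K ((↑) : ({b z, b m} : Set A) → A) :=
      ((linearIndepOn_id_range_iff b.injective).mpr b.linearIndependent).mono (by
        intro x hx
        rcases hx with rfl | hx
        · exact ⟨z, rfl⟩
        · rw [Set.mem_singleton_iff] at hx; subst hx; exact ⟨m, rfl⟩)
    have hcard : ({b z, b m} : Set A).toFinset.card = 2 := by
      rw [Set.toFinset_insert, Set.toFinset_singleton]
      rw [Finset.card_insert_of_notMem (by simp [hbne]), Finset.card_singleton]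
    have hfr : Module.finrank K ↥J = 2 := by
      rw [hJdef, hJset, finrank_span_set_eq_card hli2, hcard]
    have hJne : J ≠ ⊤ := by
      intro he
      have : Module.finrank K ↥J = n := by
        rw [he, finrank_top, Module.finrank_eq_card_basis b, Fintype.card_fin]
      omega
    have := hmax J {z, m} hJideal hJne (by rw [hJdef])
    omega
  have hσne : ∀ j : Fin n, σ j ≠ z ↔ j ≠ z := by
    intro j
    constructor
    · intro h he; exact h (by rw [he, hσz])
    · intro h he; exact h (σ.injective (by rw [he, hσz]))
  constructor
  · have himg : σ '' {j : Fin n | j ≠ z ∧ structMatrix b' z j = 0} =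
        {j : Fin n | j ≠ z ∧ structMatrix b z j = 0} := by
      ext x
      simp only [Set.mem_image, Set.mem_setOf_eq]
      constructor
      · rintro ⟨j, ⟨hj, h0⟩, rfl⟩
        refine ⟨(hσne j).mpr hj, ?_⟩
        rw [hzero, hσz] at h0
        exact h0
      · rintro ⟨hx, h0⟩
        refine ⟨σ.symm x, ⟨?_, ?_⟩, σ.apply_symm_apply x⟩
        · rw [← hσne, σ.apply_symm_apply]; exact hx
        · rw [hzero, hσz, σ.apply_symm_apply]; exact h0
    rw [← himg, Set.ncard_image_of_injective _ σ.injective]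
  · have himg : (Prod.map σ σ) '' {p : Fin n × Fin n | p.1 ≠ z ∧ p.2 ≠ z ∧
          structMatrix b' p.1 p.2 = 0} =
        {p : Fin n × Fin n | p.1 ≠ z ∧ p.2 ≠ z ∧ structMatrix b p.1 p.2 = 0} := by
      ext ⟨x, y⟩
      simp only [Set.mem_image, Set.mem_setOf_eq, Prod.exists, Prod.map_apply, Prod.mk.injEq]
      constructor
      · rintro ⟨i, j, ⟨hi, hj, h0⟩, rfl, rfl⟩
        exact ⟨(hσne i).mpr hi, (hσne j).mpr hj, (hzero i j).mp h0⟩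
      · rintro ⟨hx, hy, h0⟩
        refine ⟨σ.symm x, σ.symm y, ⟨?_, ?_, ?_⟩, σ.apply_symm_apply x, σ.apply_symm_apply y⟩
        · rw [← hσne, σ.apply_symm_apply]; exact hx
        · rw [← hσne, σ.apply_symm_apply]; exact hy
        · rw [hzero, σ.apply_symm_apply, σ.apply_symm_apply]; exact h0
    rw [← himg, Set.ncard_image_of_injective _ (σ.injective.prodMap σ.injective)]
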